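/- arXiv:2008.06567 — 3 statements merged into one kernel-verified Lean document; each statement's English description precedes it below -/
import Mathlib

section
/- Let u : ℝ^d → ℝ be convex and nonnegative, and suppose u vanishes on the hyperplane {x : x·e = 0} for some unit vector e. Then u(x) depends only on x·e; that is, u(x) = u((x·e)e) for all x, equivalently u(x) = u(y) whenever x·e = y·e. -/
/-!
A convex function bounded above on a subspace `K` is bounded above on every translate `y + K`
(`y + k` is the midpoint of `2 • y` and `2 • k`), and a convex function bounded above on a line is
constant on it: from `y + k = (1 - a) • y + a • (y + a⁻¹ • k)` one gets
`u (y + k) ≤ (1 - a) * u y + a * M`, and `a → 0` gives `u (y + k) ≤ u y`. Apply this to the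
hyperplane `⟪x, e⟫ = 0`, on which `u` vanishes.
-/

open Set Filter Topology

namespace ConvexOn

variable {E : Type*} [AddCommGroup E] [Module ℝ E] {u : E → ℝ} {K : Submodule ℝ E}

lemma map_add_le_of_forall_le (hu : ConvexOn ℝ univ u) {C : ℝ} (hC : ∀ k ∈ K, u k ≤ C)
    (y : E) {k : E} (hk : k ∈ K) : u (y + k) ≤ (u (2 • y) + C) / 2 := by
  have hmid : y + k = (1 / 2 : ℝ) • (2 • y) + (1 / 2 : ℝ) • (2 • k) := by
    simp only [two_smul, smul_add, ← add_smul]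
    norm_num
  calc u (y + k) ≤ (1 / 2) * u (2 • y) + (1 / 2) * u (2 • k) := by
        rw [hmid]; exact hu.2 (mem_univ _) (mem_univ _) (by norm_num) (by norm_num) (by norm_num)
    _ ≤ (u (2 • y) + C) / 2 := by
        have := hC _ (K.smul_of_tower_mem 2 hk); linarith

lemma map_add_le_of_forall_add_le (hu : ConvexOn ℝ univ u) {y : E} {M : ℝ}
    (hM : ∀ k ∈ K, u (y + k) ≤ M) {k : E} (hk : k ∈ K) : u (y + k) ≤ u y := by
  have hchord : ∀ a ∈ Ioc (0 : ℝ) 1, u (y + k) ≤ (1 - a) * u y + a * M := by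
    rintro a ⟨ha0, ha1⟩
    have hsplit : y + k = (1 - a) • y + a • (y + a⁻¹ • k) := by
      rw [smul_add, smul_inv_smul₀ ha0.ne', ← add_assoc, ← add_smul, sub_add_cancel, one_smul]
    calc u (y + k) ≤ (1 - a) * u y + a * u (y + a⁻¹ • k) := by
          rw [hsplit]
          exact hu.2 (mem_univ _) (mem_univ _) (by linarith) ha0.le (by ring)
      _ ≤ (1 - a) * u y + a * M := by
          gcongr; exact hM _ (K.smul_mem _ hk)
  have hlim : Tendsto (fun a : ℝ => (1 - a) * u y + a * M) (𝓝[>] 0) (𝓝 (u y)) := by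
    have : Continuous (fun a : ℝ => (1 - a) * u y + a * M) := by fun_prop
    simpa using (this.tendsto 0).mono_left nhdsWithin_le_nhds
  exact ge_of_tendsto hlim (eventually_of_mem (Ioc_mem_nhdsGT one_pos) hchord)

theorem eq_of_sub_mem_of_bddAbove (hu : ConvexOn ℝ univ u) (hK : BddAbove (u '' K)) {x y : E}
    (h : x - y ∈ K) : u x = u y := by
  obtain ⟨C, hC⟩ := hK
  have hCK : ∀ k ∈ K, u k ≤ C := fun k hk => hC (mem_image_of_mem u hk)
  have hcoset : ∀ z, ∀ k ∈ K, u (z + k) ≤ u z := fun z _ hk =>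
    hu.map_add_le_of_forall_add_le (fun _ hk' => hu.map_add_le_of_forall_le hCK z hk') hk
  have hyx : y - x ∈ K := by simpa only [neg_sub] using K.neg_mem h
  apply le_antisymm
  · simpa only [add_sub_cancel] using hcoset y _ h
  · simpa only [add_sub_cancel] using hcoset x _ hyx

end ConvexOn

theorem convex_vanishing_hyperplane_one_dimensional_general {d : ℕ}
    (u : EuclideanSpace ℝ (Fin d) → ℝ)
    (hconv : ConvexOn ℝ Set.univ u)
    (e : EuclideanSpace ℝ (Fin d))
    (hzero : ∀ x, inner (𝕜 := ℝ) x e = (0 : ℝ) → u x = 0) :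
    ∀ x y, inner (𝕜 := ℝ) x e = (inner (𝕜 := ℝ) y e : ℝ) → u x = u y := by
  intro x y h
  have hbdd : BddAbove (u '' (ℝ ∙ e)ᗮ) := by
    refine ⟨0, ?_⟩
    rintro _ ⟨z, hz, rfl⟩
    exact (hzero z (Submodule.mem_orthogonal_singleton_iff_inner_left.mp hz)).le
  refine hconv.eq_of_sub_mem_of_bddAbove hbdd ?_
  rw [Submodule.mem_orthogonal_singleton_iff_inner_left, inner_sub_left, h, sub_self]

/-- A convex nonnegative function on `ℝ^d` vanishing on the hyperplane `{x·e = 0}`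
(for a unit vector `e`) depends only on `x·e`: `u x = u y` whenever `x·e = y·e`. -/
theorem convex_vanishing_hyperplane_one_dimensional {d : ℕ}
    (u : EuclideanSpace ℝ (Fin d) → ℝ)
    (hconv : ConvexOn ℝ Set.univ u) (hnn : ∀ x, 0 ≤ u x)
    (e : EuclideanSpace ℝ (Fin d)) (he : ‖e‖ = 1)
    (hzero : ∀ x, inner (𝕜 := ℝ) x e = (0 : ℝ) → u x = 0) :
    ∀ x y, inner (𝕜 := ℝ) x e = (inner (𝕜 := ℝ) y e : ℝ) → u x = u y :=
  convex_vanishing_hyperplane_one_dimensional_general u hconv e hzero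
end

section
/- Let C ⊂ ℝ^d be a closed convex cone with vertex at the origin and nonempty interior (equivalently, positive Lebesgue measure), and suppose that for every unit vector e with −e ∈ ∂C one has e ∈ C. Then C is a closed half-space, i.e., C = {x : x·ν ≤ 0} for some unit vector ν. -/
/-!
Separating a point outside `C` from `C` gives a nonzero functional `f ≤ 0` on `C`. The frontier of
a cone is invariant under positive dilations, so normalising a frontier point `z` and applying the
reflection hypothesis yields `-z ∈ C`; hence `f` vanishes on `∂C`. The open half-space `{f < 0}` is
connected, avoids `∂C` and meets the interior of `C`, so it lies in `C`, and so does its closure.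
-/

open Set Pointwise

section Topology

variable {X : Type*} [TopologicalSpace X] {s C : Set X}

theorem IsPreconnected.subset_interior_of_disjoint_frontier (hs : IsPreconnected s)
    (hdisj : Disjoint s (frontier C)) (hsC : (s ∩ C).Nonempty) : s ⊆ interior C := by
  obtain ⟨y, hys, hyC⟩ := hsC
  have hcover : s ⊆ interior C ∪ (closure C)ᶜ := fun x hxs => by
    have hx := disjoint_left.1 hdisj hxs
    rw [frontier, mem_sdiff] at hx
    tauto
  refine hs.subset_left_of_subset_union isOpen_interior isClosed_closure.isOpen_compl
    (disjoint_compl_right_iff_subset.2 (interior_subset.trans subset_closure)) hcover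
    ⟨y, hys, ?_⟩
  exact (hcover hys).resolve_right (not_not.2 (subset_closure hyC))

end Topology

section Functional

variable {E : Type*} [AddCommGroup E] [Module ℝ E] [TopologicalSpace E] [ContinuousAdd E]
  [ContinuousSMul ℝ E] {C : Set E} {f : StrongDual ℝ E}

theorem StrongDual.apply_lt_zero_of_mem_interior (hf : f ≠ 0) (hfC : ∀ x ∈ C, f x ≤ 0) {y : E}
    (hy : y ∈ interior C) : f y < 0 := by
  have hsub : f '' interior C ⊆ interior (Iic 0) :=
    interior_maximal (image_subset_iff.2 fun x hx => hfC x (interior_subset hx))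
      (f.isOpenMap_of_ne_zero hf _ isOpen_interior)
  rw [interior_Iic] at hsub
  exact hsub (mem_image_of_mem f hy)

theorem StrongDual.setOf_nonpos_subset_of_frontier (hC : IsClosed C)
    (hfr : ∀ z ∈ frontier C, f z = 0) {y : E} (hyC : y ∈ C) (hfy : f y < 0) :
    {x | f x ≤ 0} ⊆ C := by
  have hf : f ≠ 0 := fun h => by simp [h] at hfy
  have hopen : f ⁻¹' Iio 0 ⊆ C := by
    have hconn : IsPreconnected (f ⁻¹' Iio 0) :=
      ((convex_Iio 0).linear_preimage f.toLinearMap).isPreconnected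
    refine (hconn.subset_interior_of_disjoint_frontier ?_ ⟨y, hfy, hyC⟩).trans interior_subset
    exact disjoint_left.2 fun x hx hxfr => hx.ne (hfr x hxfr)
  have hclos := (f.isOpenMap_of_ne_zero hf).preimage_closure_eq_closure_preimage f.continuous
    (Iio 0)
  rw [closure_Iio] at hclos
  exact hclos.trans_subset (closure_minimal hopen hC)

end Functional

theorem exists_strongDual_nonpos_of_cone {E : Type*} [AddCommGroup E] [Module ℝ E]
    [TopologicalSpace E] [IsTopologicalAddGroup E] [ContinuousSMul ℝ E] [LocallyConvexSpace ℝ E]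
    {C : Set E} (hC : IsClosed C) (hconv : Convex ℝ C)
    (hcone : ∀ x ∈ C, ∀ lam : ℝ, 0 ≤ lam → lam • x ∈ C) (h0 : (0 : E) ∈ C) {x₀ : E}
    (hx₀ : x₀ ∉ C) : ∃ f : StrongDual ℝ E, (∀ x ∈ C, f x ≤ 0) ∧ 0 < f x₀ := by
  obtain ⟨f, u, hfC, hux₀⟩ := geometric_hahn_banach_closed_point hconv hC hx₀
  have hu : 0 < u := by simpa using hfC 0 h0
  refine ⟨f, fun x hx => not_lt.1 fun hfx => ?_, hu.trans hux₀⟩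
  -- scaling `x` pushes `f` up to the level `u` inside `C`
  have h := hfC _ (hcone x hx (u / f x) (div_nonneg hu.le hfx.le))
  rw [map_smul, smul_eq_mul, div_mul_cancel₀ _ hfx.ne'] at h
  exact lt_irrefl u h

section Cone

variable {E : Type*} [AddCommGroup E] [Module ℝ E] {C : Set E}

theorem smul_set_eq_self_of_cone (hcone : ∀ x ∈ C, ∀ lam : ℝ, 0 ≤ lam → lam • x ∈ C) {c : ℝ}
    (hc : 0 < c) : c • C = C := by
  refine (smul_set_subset_iff₀ hc.ne').2 (fun x hx => ?_) |>.antisymm fun x hx => ?_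
  · simpa [mem_smul_set_iff_inv_smul_mem₀ (inv_ne_zero hc.ne')] using hcone x hx c hc.le
  · exact (mem_smul_set_iff_inv_smul_mem₀ hc.ne' C x).2 (hcone x hx c⁻¹ (inv_nonneg.2 hc.le))

theorem smul_mem_frontier_of_cone [TopologicalSpace E] [ContinuousConstSMul ℝ E]
    (hcone : ∀ x ∈ C, ∀ lam : ℝ, 0 ≤ lam → lam • x ∈ C) {z : E} (hz : z ∈ frontier C) {c : ℝ}
    (hc : 0 < c) : c • z ∈ frontier C := by
  have h := (isHomeomorph_smul₀ hc.ne').image_frontier C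
  rw [image_smul, image_smul, smul_set_eq_self_of_cone hcone hc] at h
  exact h ▸ smul_mem_smul_set hz

end Cone

theorem neg_mem_of_mem_frontier_of_cone {E : Type*} [NormedAddCommGroup E] [NormedSpace ℝ E]
    {C : Set E} (hC : IsClosed C) (hcone : ∀ x ∈ C, ∀ lam : ℝ, 0 ≤ lam → lam • x ∈ C)
    (hrefl : ∀ e : E, ‖e‖ = 1 → -e ∈ frontier C → e ∈ C) {z : E} (hz : z ∈ frontier C) :
    -z ∈ C := by
  rcases eq_or_ne z 0 with rfl | hz0
  · simpa using hC.frontier_subset hz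
  have hnz : 0 < ‖z‖ := norm_pos_iff.2 hz0
  have hu : -(‖z‖⁻¹ • z) ∈ C := hrefl _ (by simp [norm_smul, hz0]) <| by
    simpa using smul_mem_frontier_of_cone hcone hz (inv_pos.2 hnz)
  simpa [smul_smul, hnz.ne'] using hcone _ hu ‖z‖ hnz.le

theorem exists_strongDual_eq_setOf_nonpos_of_cone {E : Type*} [NormedAddCommGroup E]
    [NormedSpace ℝ E] {C : Set E}
    (hC : IsClosed C) (hconv : Convex ℝ C) (hcone : ∀ x ∈ C, ∀ lam : ℝ, 0 ≤ lam → lam • x ∈ C)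
    (hint : (interior C).Nonempty) (hproper : C ≠ univ)
    (hrefl : ∀ e : E, ‖e‖ = 1 → -e ∈ frontier C → e ∈ C) :
    ∃ f : StrongDual ℝ E, f ≠ 0 ∧ C = {x | f x ≤ 0} := by
  obtain ⟨y, hy⟩ := hint
  have h0 : (0 : E) ∈ C := by simpa using hcone y (interior_subset hy) 0 le_rfl
  obtain ⟨x₀, hx₀⟩ := (ne_univ_iff_exists_notMem C).1 hproper
  obtain ⟨f, hfC, hfx₀⟩ := exists_strongDual_nonpos_of_cone hC hconv hcone h0 hx₀
  have hf : f ≠ 0 := by rintro rfl; simp at hfx₀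
  have hfr : ∀ z ∈ frontier C, f z = 0 := fun z hz =>
    le_antisymm (hfC z (hC.frontier_subset hz))
      (by simpa using hfC _ (neg_mem_of_mem_frontier_of_cone hC hcone hrefl hz))
  have hfy : f y < 0 := f.apply_lt_zero_of_mem_interior hf hfC hy
  exact ⟨f, hf,
    Subset.antisymm hfC (f.setOf_nonpos_subset_of_frontier hC hfr (interior_subset hy) hfy)⟩

theorem StrongDual.exists_norm_eq_one_setOf_nonpos_eq {F : Type*} [NormedAddCommGroup F]
    [InnerProductSpace ℝ F] [CompleteSpace F] {f : StrongDual ℝ F} (hf : f ≠ 0) :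
    ∃ ν : F, ‖ν‖ = 1 ∧ {x | f x ≤ 0} = {x | inner ℝ x ν ≤ 0} := by
  set ν₀ := (InnerProductSpace.toDual ℝ F).symm f
  have hν₀ : ν₀ ≠ 0 := by simpa [ν₀] using hf
  refine ⟨‖ν₀‖⁻¹ • ν₀, by simp [norm_smul, hν₀], ?_⟩
  ext x
  have hx : inner ℝ x (‖ν₀‖⁻¹ • ν₀) = ‖ν₀‖⁻¹ * f x := by
    rw [real_inner_smul_right, real_inner_comm, InnerProductSpace.toDual_symm_apply]
  simp [hx, mul_nonpos_iff_pos_imp_nonpos, hν₀]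

/-- A proper closed convex cone `C ⊂ ℝ^d` with vertex at the origin and nonempty
interior, such that `e ∈ C` whenever `-e` is a unit vector on `∂C`, is a closed
half-space `{x : x·ν ≤ 0}`. -/
theorem cone_is_halfSpace {d : ℕ} (C : Set (EuclideanSpace ℝ (Fin d)))
    (hclosed : IsClosed C) (hconv : Convex ℝ C)
    (hcone : ∀ x ∈ C, ∀ lam : ℝ, 0 ≤ lam → lam • x ∈ C)
    (hint : (interior C).Nonempty) (hproper : C ≠ Set.univ)
    (hrefl : ∀ e : EuclideanSpace ℝ (Fin d), ‖e‖ = 1 → -e ∈ frontier C → e ∈ C) :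
    ∃ ν : EuclideanSpace ℝ (Fin d), ‖ν‖ = 1 ∧
      C = {x | inner (𝕜 := ℝ) x ν ≤ (0 : ℝ)} := by
  obtain ⟨f, hf, rfl⟩ :=
    exists_strongDual_eq_setOf_nonpos_of_cone hclosed hconv hcone hint hproper hrefl
  exact f.exists_norm_eq_one_setOf_nonpos_eq hf
end

section
/- Let u : B_ρ → ℝ (B_ρ ⊂ ℝ^d a ball centered at 0) be continuous with u(0) = 0, u ≥ 0, and suppose D_e u ≥ 0 in B_ρ (in the sense that u is nondecreasing along direction e inside B_ρ) for every unit vector e with e·ξ₁ ≥ 1/2, where ξ₁ is the first standard basis vector. Then there exists a Lipschitz function f : B_ρ ∩ {x₁ = 0} → ℝ with Lipschitz constant at most √3 such that {u = 0} ∩ B_ρ = {x ∈ B_ρ : x₁ ≤ f(x')} and {u > 0} ∩ B_ρ = {x ∈ B_ρ : x₁ > f(x')}. -/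
open Metric

private noncomputable def pj {d : ℕ} (i : Fin d) (w : EuclideanSpace ℝ (Fin d)) : EuclideanSpace ℝ (Fin d) :=
  w - w i • EuclideanSpace.single i 1

private lemma coord_abs_le_norm {d : ℕ} (i : Fin d) (z : EuclideanSpace ℝ (Fin d)) :
    |z i| ≤ ‖z‖ := by
  have h := abs_real_inner_le_norm z (EuclideanSpace.single i (1 : ℝ))
  simpa [EuclideanSpace.inner_single_right, EuclideanSpace.norm_single] using h

private lemma pj_pyth {d : ℕ} (i : Fin d) (w : EuclideanSpace ℝ (Fin d)) :
    ‖w‖ ^ 2 = (w i) ^ 2 + ‖pj i w‖ ^ 2 := by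
  simp only [pj]
  have hs : ‖EuclideanSpace.single i (1 : ℝ)‖ = 1 := by
    simp [EuclideanSpace.norm_single]
  have horth : inner (𝕜 := ℝ) (w - w i • EuclideanSpace.single i 1)
      (w i • EuclideanSpace.single i 1) = 0 := by
    simp only [inner_sub_left, real_inner_smul_left, real_inner_smul_right]
    have h1 : inner (𝕜 := ℝ) w (EuclideanSpace.single i (1 : ℝ)) = w i := by
      simp [EuclideanSpace.inner_single_right]
    have h2 : inner (𝕜 := ℝ) (EuclideanSpace.single i (1 : ℝ))
        (EuclideanSpace.single i (1 : ℝ)) = 1 := by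
      simp [EuclideanSpace.inner_single_right, EuclideanSpace.single_apply]
    rw [h1, h2]
    ring
  have h := norm_add_sq_real (w - w i • EuclideanSpace.single i 1)
    (w i • EuclideanSpace.single i 1)
  rw [sub_add_cancel, horth, norm_smul, hs, Real.norm_eq_abs] at h
  rw [h, mul_one, sq_abs]
  ring

private lemma pj_norm_le {d : ℕ} (i : Fin d) (w : EuclideanSpace ℝ (Fin d)) :
    ‖pj i w‖ ≤ ‖w‖ := by
  have h := pj_pyth i w
  nlinarith [norm_nonneg (pj i w), norm_nonneg w, sq_nonneg (w i)]

private lemma pj_coord {d : ℕ} (i : Fin d) (w : EuclideanSpace ℝ (Fin d)) :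
    (pj i w) i = 0 := by
  simp [pj]

private lemma pj_pj {d : ℕ} (i : Fin d) (w : EuclideanSpace ℝ (Fin d)) :
    pj i (pj i w) = pj i w := by
  have h : pj i (pj i w) = pj i w - (pj i w) i • EuclideanSpace.single i 1 := rfl
  rw [h, pj_coord, zero_smul, sub_zero]

private lemma pj_sub {d : ℕ} (i : Fin d) (z y : EuclideanSpace ℝ (Fin d)) :
    pj i z - pj i y = pj i (z - y) := by
  simp only [pj]
  have h : (z - y) i = z i - y i := by simp
  rw [h, sub_smul]
  abel

/-- Cone of monotonicity implies a Lipschitz free boundary: if `u ≥ 0` is continuous on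
`B_ρ` with `u(0) = 0` and `u` is nondecreasing along every unit direction `e` with
`e·ξ₁ ≥ 1/2`, then there is a function `f` on `B_ρ ∩ {x₁ = 0}`, Lipschitz with constant
`√3`, such that `{u = 0} ∩ B_ρ = {x₁ ≤ f(x')}` and `{u > 0} ∩ B_ρ = {x₁ > f(x')}`. -/
theorem cone_monotonicity_lipschitz_graph {d : ℕ} (hd : 0 < d) (ρ : ℝ) (hρ : 0 < ρ)
    (u : EuclideanSpace ℝ (Fin d) → ℝ)
    (hu : ContinuousOn u (ball (0 : EuclideanSpace ℝ (Fin d)) ρ))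
    (hu0 : u 0 = 0)
    (hnn : ∀ x ∈ ball (0 : EuclideanSpace ℝ (Fin d)) ρ, 0 ≤ u x)
    (hmono : ∀ e : EuclideanSpace ℝ (Fin d), ‖e‖ = 1 →
      (1 / 2 : ℝ) ≤ inner (𝕜 := ℝ) e (EuclideanSpace.single (⟨0, hd⟩ : Fin d) 1) →
      ∀ x ∈ ball (0 : EuclideanSpace ℝ (Fin d)) ρ, ∀ t : ℝ, 0 ≤ t →
        x + t • e ∈ ball (0 : EuclideanSpace ℝ (Fin d)) ρ → u x ≤ u (x + t • e)) :
    ∃ f : EuclideanSpace ℝ (Fin d) → ℝ,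
      LipschitzOnWith (Real.sqrt 3).toNNReal f
        {x ∈ ball (0 : EuclideanSpace ℝ (Fin d)) ρ | x ⟨0, hd⟩ = 0} ∧
      ∀ x ∈ ball (0 : EuclideanSpace ℝ (Fin d)) ρ,
        (u x = 0 ↔
          x ⟨0, hd⟩ ≤ f (x - x ⟨0, hd⟩ • EuclideanSpace.single (⟨0, hd⟩ : Fin d) 1)) ∧
        (0 < u x ↔
          f (x - x ⟨0, hd⟩ • EuclideanSpace.single (⟨0, hd⟩ : Fin d) 1) < x ⟨0, hd⟩) := by
  classical
  set i : Fin d := (⟨0, hd⟩ : Fin d) with hidef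
  set c : ℝ := Real.sqrt 3 with hcdef
  have hc0 : (0 : ℝ) ≤ c := Real.sqrt_nonneg 3
  have hcpos : (0 : ℝ) < c := Real.sqrt_pos.mpr (by norm_num)
  have hc2 : c ^ 2 = 3 := Real.sq_sqrt (by norm_num)
  have hc1 : (1 : ℝ) ≤ c := by nlinarith
  -- cone monotonicity in coordinates
  have hcone : ∀ y ∈ ball (0 : EuclideanSpace ℝ (Fin d)) ρ,
      ∀ z ∈ ball (0 : EuclideanSpace ℝ (Fin d)) ρ,
      ‖pj i z - pj i y‖ ≤ c * (z i - y i) → u y ≤ u z := by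
    intro y hy z hz h
    rcases eq_or_ne z y with rfl | hne
    · exact le_rfl
    have hw0 : z - y ≠ 0 := sub_ne_zero.mpr hne
    have hwi : (z - y) i = z i - y i := by simp
    rw [pj_sub] at h
    rw [← hwi] at h
    have hge : (0 : ℝ) ≤ (z - y) i := by
      nlinarith [norm_nonneg (pj i (z - y)), h, hcpos]
    have hpy := pj_pyth i (z - y)
    have hsq := mul_le_mul h h (norm_nonneg _) (mul_nonneg hc0 hge)
    have hle2 : ‖z - y‖ ≤ 2 * ((z - y) i) := by
      nlinarith [norm_nonneg (z - y), sq_nonneg ((z - y) i)]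
    set t : ℝ := ‖z - y‖ with htdef
    have ht : (0 : ℝ) < t := norm_pos_iff.mpr hw0
    set e : EuclideanSpace ℝ (Fin d) := t⁻¹ • (z - y) with hedef
    have he : ‖e‖ = 1 := norm_smul_inv_norm hw0
    have hei : inner (𝕜 := ℝ) e (EuclideanSpace.single i (1 : ℝ)) = t⁻¹ * ((z - y) i) := by
      rw [hedef]
      simp [real_inner_smul_left, EuclideanSpace.inner_single_right]
    have h12 : (1 / 2 : ℝ) ≤ inner (𝕜 := ℝ) e (EuclideanSpace.single i (1 : ℝ)) := by
      rw [hei, inv_mul_eq_div, le_div_iff₀ ht]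
      linarith
    have hz' : y + t • e = z := by
      rw [hedef, smul_inv_smul₀ ht.ne']
      abel
    have := hmono e he h12 y hy t (norm_nonneg _) (by rw [hz']; exact hz)
    rwa [hz'] at this
  -- the zero set and the graph function
  set Z : Set (EuclideanSpace ℝ (Fin d)) :=
    {z | z ∈ ball (0 : EuclideanSpace ℝ (Fin d)) ρ ∧ u z = 0} with hZdef
  have hZne : Z.Nonempty := ⟨0, mem_ball_self hρ, hu0⟩
  set g : EuclideanSpace ℝ (Fin d) → EuclideanSpace ℝ (Fin d) → ℝ :=
    fun w z => z i - c * ‖pj i z - pj i w‖ with hgdef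
  set f : EuclideanSpace ℝ (Fin d) → ℝ := fun w => sSup (g w '' Z) with hfdef
  have hgeq : ∀ w z, g w z = z i - c * ‖pj i z - pj i w‖ := fun _ _ => rfl
  have hfeq : ∀ w, f w = sSup (g w '' Z) := fun _ => rfl
  have hne' : ∀ w, (g w '' Z).Nonempty := fun w => hZne.image _
  have hbdd : ∀ w, BddAbove (g w '' Z) := by
    intro w
    refine ⟨ρ, ?_⟩
    rintro r ⟨z, hzZ, rfl⟩
    rw [hZdef] at hzZ
    obtain ⟨hzb, -⟩ := hzZ
    have h1 : |z i| ≤ ‖z‖ := coord_abs_le_norm i z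
    have h2 : ‖z‖ < ρ := mem_ball_zero_iff.mp hzb
    have h3 : (0 : ℝ) ≤ c * ‖pj i z - pj i w‖ := mul_nonneg hc0 (norm_nonneg _)
    rw [hgeq]
    have := le_abs_self (z i)
    linarith
  -- Lipschitz estimate
  have hlips : ∀ v w, f w ≤ f v + c * ‖w - v‖ := by
    intro v w
    rw [hfeq w]
    apply csSup_le (hne' w)
    rintro r ⟨z, hzZ, rfl⟩
    have t0 := dist_triangle (pj i z) (pj i w) (pj i v)
    rw [dist_eq_norm, dist_eq_norm, dist_eq_norm] at t0
    have t2 : ‖pj i w - pj i v‖ ≤ ‖w - v‖ := by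
      rw [pj_sub]; exact pj_norm_le i (w - v)
    have t1 : ‖pj i z - pj i v‖ ≤ ‖pj i z - pj i w‖ + ‖w - v‖ := by linarith
    have h2 : g v z ≤ f v := by
      rw [hfeq v]; exact le_csSup (hbdd v) ⟨z, hzZ, rfl⟩
    have h3 := mul_le_mul_of_nonneg_left t1 hc0
    rw [mul_add] at h3
    rw [hgeq w z]
    rw [hgeq v z] at h2
    linarith
  have hlip' : ∀ v w, |f w - f v| ≤ c * ‖w - v‖ := by
    intro v w
    rw [abs_sub_le_iff]
    constructor
    · linarith [hlips v w]
    · have h := hlips w v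
      rw [norm_sub_rev] at h
      linarith
  -- characterization, easy direction
  have hA : ∀ x ∈ ball (0 : EuclideanSpace ℝ (Fin d)) ρ, u x = 0 → x i ≤ f (pj i x) := by
    intro x hx h0
    have hxZ : x ∈ Z := by rw [hZdef]; exact ⟨hx, h0⟩
    have hm : g (pj i x) x = x i := by
      rw [hgeq, pj_pj, sub_self, norm_zero, mul_zero, sub_zero]
    have h := le_csSup (hbdd (pj i x)) (Set.mem_image_of_mem (g (pj i x)) hxZ)
    rw [hm] at h
    rw [hfeq]
    exact h
  -- characterization, positivity direction
  have hD : ∀ x ∈ ball (0 : EuclideanSpace ℝ (Fin d)) ρ, 0 < u x → f (pj i x) < x i := by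
    intro x hx hux
    have hcx : ContinuousAt u x := hu.continuousAt (isOpen_ball.mem_nhds hx)
    have hnb : u ⁻¹' Set.Ioi 0 ∩ ball (0 : EuclideanSpace ℝ (Fin d)) ρ ∈ nhds x :=
      Filter.inter_mem (hcx (Ioi_mem_nhds hux)) (isOpen_ball.mem_nhds hx)
    obtain ⟨δ, hδ, hball⟩ := Metric.mem_nhds_iff.mp hnb
    set y : EuclideanSpace ℝ (Fin d) := x - (δ / 2) • EuclideanSpace.single i (1 : ℝ)
      with hydef
    have hdyx : dist y x < δ := by
      have h1 : y - x = -((δ / 2) • EuclideanSpace.single i (1 : ℝ)) := by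
        rw [hydef]; abel
      rw [dist_eq_norm, h1, norm_neg, norm_smul, EuclideanSpace.norm_single,
        Real.norm_eq_abs, Real.norm_eq_abs, abs_one, mul_one,
        abs_of_pos (by linarith : (0 : ℝ) < δ / 2)]
      linarith
    have hymem := hball (mem_ball.mpr hdyx)
    have huy : 0 < u y := hymem.1
    have hyball : y ∈ ball (0 : EuclideanSpace ℝ (Fin d)) ρ := hymem.2
    have hyi : y i = x i - δ / 2 := by
      rw [hydef]; simp
    have hpy : pj i y = pj i x := by
      simp only [pj]
      rw [hyi, hydef, sub_smul]
      abel
    have hkey : ∀ r ∈ g (pj i x) '' Z, r ≤ x i - δ / 2 := by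
      rintro r ⟨z, hzZ, rfl⟩
      rw [hZdef] at hzZ
      obtain ⟨hzb, hz0⟩ := hzZ
      by_contra hcon
      push_neg at hcon
      rw [hgeq, pj_pj] at hcon
      have h1 : ‖pj i z - pj i y‖ ≤ c * (z i - y i) := by
        rw [hpy, hyi]
        nlinarith [norm_nonneg (pj i z - pj i x), mul_nonneg hc0 (norm_nonneg (pj i z - pj i x))]
      have h2 := hcone y hyball z hzb h1
      rw [hz0] at h2
      exact absurd h2 (not_le.mpr huy)
    have hfle : f (pj i x) ≤ x i - δ / 2 := by
      rw [hfeq]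
      exact csSup_le (hne' _) hkey
    linarith
  -- assemble
  refine ⟨f, ?_, ?_⟩
  · have hl : LipschitzWith c.toNNReal f := by
      apply LipschitzWith.of_dist_le_mul
      intro a b
      rw [Real.coe_toNNReal c hc0, Real.dist_eq, dist_eq_norm]
      exact hlip' b a
    exact hl.lipschitzOnWith
  · intro x hx
    have hfx : x - x i • EuclideanSpace.single i 1 = pj i x := rfl
    rw [hfx]
    constructor
    · constructor
      · exact fun h0 => hA x hx h0
      · intro hle
        rcases (hnn x hx).eq_or_lt with h | h
        · exact h.symm
        · exact absurd hle (not_le.mpr (hD x hx h))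
    · constructor
      · exact fun h => hD x hx h
      · intro hlt
        rcases (hnn x hx).eq_or_lt with h | h
        · exact absurd (hA x hx h.symm) (not_le.mpr hlt)
        · exact h
end
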